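/- Let Ω ⊆ ℝ² be a convex closed set. If A_Ω = {(i,j) ∈ ℤ² : inf_Ω (ix+jy) > -∞} equals {(0,0)} and Ω has nonempty interior, then Ω is either all of ℝ², or a half-plane whose boundary has irrational slope, or a strip between two parallel lines of irrational slope. -/

import Mathlib

/-- `(a,b)` is proportional to a nonzero integer vector. -/
def normalIsRational (a b : ℝ) : Prop :=
  ∃ m n : ℤ, (m, n) ≠ ((0 : ℤ), (0 : ℤ)) ∧ a * (n : ℝ) = b * (m : ℝ)

/-!
The directions `v` in which `p ↦ v ⬝ p` is bounded below on `Ω` form a convex cone `B`, the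
barrier cone, and the closed convex set `Ω` is the intersection of the half-planes
`{p | inf_Ω (v ⬝ ·) ≤ v ⬝ p}` over `v ∈ B` (Hahn–Banach). If `B` contained two independent
vectors it would contain an open sector, hence a rational point, hence after scaling a nonzero
integer point. So `B` lies on a line `ℝ v`, and `v` has irrational direction, since otherwise a
positive multiple of `v` would be an integer point. Thus `B` is `{0}`, a ray or a line, and `Ω`
is the plane, a half-plane or a strip.
-/

lemma normalIsRational.of_neg {a b : ℝ} (h : normalIsRational (-a) (-b)) :
    normalIsRational a b := by
  obtain ⟨m, n, hmn, h⟩ := h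
  exact ⟨m, n, hmn, by linarith⟩

lemma Prod.exists_eq_smul_of_mul_eq_mul {K : Type*} [Field K] {v w : K × K} (hv : v ≠ 0)
    (h : v.1 * w.2 = v.2 * w.1) : ∃ t : K, w = t • v := by
  rcases eq_or_ne v.1 0 with h₁ | h₁
  · have h₂ : v.2 ≠ 0 := fun h₂ => hv (Prod.ext h₁ h₂)
    have hw₁ : w.1 = 0 := by simpa [h₁, h₂] using h
    exact ⟨w.2 / v.2, Prod.ext (by simp [h₁, hw₁]) (by simp [h₂])⟩
  · refine ⟨w.1 / v.1, Prod.ext (by simp [h₁]) ?_⟩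
    simp only [Prod.smul_snd, smul_eq_mul]
    field_simp
    linear_combination h

lemma exists_rat_mem_of_isOpen {U : Set (ℝ × ℝ)} (hU : IsOpen U) (hne : U.Nonempty) :
    ∃ a b : ℚ, ((a : ℝ), (b : ℝ)) ∈ U :=
  let ⟨q, hq⟩ := (Rat.denseRange_cast.prodMap Rat.denseRange_cast).exists_mem_open hU hne
  ⟨q.1, q.2, hq⟩

namespace PointedCone

lemma nonneg_of_smul_mem {𝕜 E : Type*} [Field 𝕜] [LinearOrder 𝕜] [IsStrictOrderedRing 𝕜]
    [AddCommGroup E] [Module 𝕜 E] (C : PointedCone 𝕜 E) {v : E} {t : 𝕜} (hv : -v ∉ C)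
    (ht : t • v ∈ C) : 0 ≤ t := by
  by_contra! h
  apply hv
  have := C.smul_mem (neg_nonneg.2 (inv_nonpos.2 h.le)) ht
  rwa [smul_smul, neg_mul, inv_mul_cancel₀ h.ne, neg_one_smul] at this

variable {C : PointedCone ℝ (ℝ × ℝ)}

lemma rat_eq_zero_of_mem (hC : ∀ z : ℤ × ℤ, ((z.1 : ℝ), (z.2 : ℝ)) ∈ C → z = (0, 0))
    {a b : ℚ} (hab : ((a : ℝ), (b : ℝ)) ∈ C) : a = 0 ∧ b = 0 := by
  have hden := C.smul_mem (r := (a.den * b.den : ℝ)) (by positivity) hab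
  have hz := hC (a.num * b.den, b.num * a.den) <| by
    convert hden using 1
    ext <;> simp only [Prod.smul_fst, Prod.smul_snd, smul_eq_mul, Rat.cast_def] <;> push_cast <;>
      field_simp
  simpa only [Prod.mk.injEq, mul_eq_zero, Nat.cast_eq_zero, Rat.den_ne_zero, or_false,
    Rat.num_eq_zero] using hz

lemma mul_eq_mul_of_mem (hC : ∀ z : ℤ × ℤ, ((z.1 : ℝ), (z.2 : ℝ)) ∈ C → z = (0, 0))
    {v w : ℝ × ℝ} (hv : v ∈ C) (hw : w ∈ C) : v.1 * w.2 = v.2 * w.1 := by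
  by_contra h
  set D := v.1 * w.2 - v.2 * w.1
  have hD : D ≠ 0 := sub_ne_zero.2 h
  -- the open sector spanned by `v` and `w`, in the coordinates of the basis `(v, w)`
  set U := {p : ℝ × ℝ | 0 < (p.1 * w.2 - p.2 * w.1) / D ∧ 0 < (v.1 * p.2 - v.2 * p.1) / D}
  have hU : IsOpen U := by
    simp only [U, Set.ofPred_and]
    exact (isOpen_lt continuous_const (by fun_prop)).inter
      (isOpen_lt continuous_const (by fun_prop))
  have hvw : v + w ∈ U := by
    have h₁ : ((v + w).1 * w.2 - (v + w).2 * w.1) / D = 1 :=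
      (div_eq_one_iff_eq hD).2 (by simp only [D, Prod.fst_add, Prod.snd_add]; ring)
    have h₂ : (v.1 * (v + w).2 - v.2 * (v + w).1) / D = 1 :=
      (div_eq_one_iff_eq hD).2 (by simp only [D, Prod.fst_add, Prod.snd_add]; ring)
    simp only [U, Set.mem_ofPred_eq, h₁, h₂, one_pos, and_self]
  have hUC : U ⊆ C := by
    rintro p ⟨hα, hβ⟩
    have hp : p = ((p.1 * w.2 - p.2 * w.1) / D) • v + ((v.1 * p.2 - v.2 * p.1) / D) • w := by
      ext <;> simp only [Prod.fst_add, Prod.snd_add, Prod.smul_fst, Prod.smul_snd, smul_eq_mul] <;>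
        field_simp <;> ring
    rw [hp]
    exact C.add_mem (C.smul_mem hα.le hv) (C.smul_mem hβ.le hw)
  obtain ⟨a, b, hab⟩ := exists_rat_mem_of_isOpen hU ⟨_, hvw⟩
  obtain ⟨rfl, rfl⟩ := rat_eq_zero_of_mem hC (hUC hab)
  simp [U] at hab

lemma exists_eq_smul_of_mem (hC : ∀ z : ℤ × ℤ, ((z.1 : ℝ), (z.2 : ℝ)) ∈ C → z = (0, 0))
    {v w : ℝ × ℝ} (hv : v ∈ C) (hv0 : v ≠ 0) (hw : w ∈ C) : ∃ t : ℝ, w = t • v :=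
  Prod.exists_eq_smul_of_mul_eq_mul hv0 (mul_eq_mul_of_mem hC hv hw)

lemma not_normalIsRational_of_mem (hC : ∀ z : ℤ × ℤ, ((z.1 : ℝ), (z.2 : ℝ)) ∈ C → z = (0, 0))
    {v : ℝ × ℝ} (hv : v ∈ C) (hv0 : v ≠ 0) : ¬ normalIsRational v.1 v.2 := by
  rintro ⟨m, n, hmn, h⟩
  obtain ⟨t, ht⟩ := Prod.exists_eq_smul_of_mul_eq_mul (w := ((m : ℝ), (n : ℝ))) hv0 h
  rcases le_total 0 t with ht0 | ht0
  · exact hmn (hC (m, n) (ht ▸ C.smul_mem ht0 hv))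
  · have hneg : (((-m : ℤ) : ℝ), ((-n : ℤ) : ℝ)) = (-t) • v := by
      rw [neg_smul, ← ht]; ext <;> simp
    have := hC (-m, -n) (hneg ▸ C.smul_mem (neg_nonneg.2 ht0) hv)
    simp only [Prod.mk.injEq, neg_eq_zero] at this
    exact hmn (Prod.ext this.1 this.2)

end PointedCone

def dot (v p : ℝ × ℝ) : ℝ := v.1 * p.1 + v.2 * p.2

lemma dot_smul_left (t : ℝ) (v p : ℝ × ℝ) : dot (t • v) p = t * dot v p := by
  simp only [dot, Prod.smul_fst, Prod.smul_snd, smul_eq_mul]; ring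

lemma dot_neg_left (v p : ℝ × ℝ) : dot (-v) p = -dot v p := by
  simp only [dot, Prod.fst_neg, Prod.snd_neg]; ring

lemma LinearMap.apply_eq_dot (f : (ℝ × ℝ) →ₗ[ℝ] ℝ) (p : ℝ × ℝ) :
    f p = dot (f (1, 0), f (0, 1)) p := by
  have hp : p = p.1 • ((1 : ℝ), (0 : ℝ)) + p.2 • ((0 : ℝ), (1 : ℝ)) := by ext <;> simp
  conv_lhs => rw [hp]
  simp only [map_add, map_smul, smul_eq_mul, dot]
  ring

-- Its lattice points form the set `A_Ω` of the paper.
def barrierCone (Ω : Set (ℝ × ℝ)) : PointedCone ℝ (ℝ × ℝ) where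
  carrier := {v | BddBelow (dot v '' Ω)}
  add_mem' := by
    rintro v w ⟨c, hc⟩ ⟨d, hd⟩
    refine ⟨c + d, Set.forall_mem_image.2 fun y hy => ?_⟩
    have := hc (Set.mem_image_of_mem _ hy)
    have := hd (Set.mem_image_of_mem _ hy)
    simp only [dot, Prod.fst_add, Prod.snd_add] at *
    linarith
  zero_mem' := ⟨0, by rintro _ ⟨y, -, rfl⟩; simp [dot]⟩
  smul_mem' := by
    rintro ⟨t, ht⟩ v ⟨c, hc⟩
    refine ⟨t * c, Set.forall_mem_image.2 fun y hy => ?_⟩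
    change t * c ≤ dot (t • v) y
    rw [dot_smul_left]
    exact mul_le_mul_of_nonneg_left (hc (Set.mem_image_of_mem _ hy)) ht

open scoped Pointwise in
lemma sInf_image_dot_smul (Ω : Set (ℝ × ℝ)) (v : ℝ × ℝ) {t : ℝ} (ht : 0 ≤ t) :
    sInf (dot (t • v) '' Ω) = t * sInf (dot v '' Ω) := by
  have : dot (t • v) '' Ω = t • (dot v '' Ω) := by
    rw [← Set.image_smul, Set.image_image]
    simp only [dot_smul_left, smul_eq_mul]
  rw [this, Real.sInf_smul_of_nonneg ht, smul_eq_mul]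

section ClosedConvex

variable {Ω : Set (ℝ × ℝ)}

lemma exists_dot_lt_sInf (hconv : Convex ℝ Ω) (hcl : IsClosed Ω) (hne : Ω.Nonempty) {p : ℝ × ℝ}
    (hp : p ∉ Ω) : ∃ w ∈ barrierCone Ω, dot w p < sInf (dot w '' Ω) := by
  obtain ⟨f, u, hfp, hfΩ⟩ := geometric_hahn_banach_point_closed hconv hcl hp
  have hf : ∀ y, f y = dot (f (1, 0), f (0, 1)) y := LinearMap.apply_eq_dot f.toLinearMap
  have hlb : ∀ y ∈ Ω, u ≤ dot (f (1, 0), f (0, 1)) y := fun y hy => hf y ▸ (hfΩ y hy).le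
  refine ⟨_, ⟨u, Set.forall_mem_image.2 hlb⟩, ?_⟩
  calc _ = f p := (hf p).symm
    _ < u := hfp
    _ ≤ _ := le_csInf (hne.image _) (Set.forall_mem_image.2 hlb)

lemma eq_setOf_forall_sInf_le_dot (hconv : Convex ℝ Ω) (hcl : IsClosed Ω) (hne : Ω.Nonempty)
    {S : Set (ℝ × ℝ)} (hS : S ⊆ barrierCone Ω)
    (hgen : ∀ w ∈ barrierCone Ω, w ≠ 0 → ∃ v ∈ S, ∃ t : ℝ, 0 ≤ t ∧ w = t • v) :
    Ω = {p | ∀ v ∈ S, sInf (dot v '' Ω) ≤ dot v p} := by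
  ext p
  refine ⟨fun hp v hv => csInf_le (hS hv) (Set.mem_image_of_mem _ hp), fun hp => ?_⟩
  by_contra hpΩ
  obtain ⟨w, hwΩ, hw⟩ := exists_dot_lt_sInf hconv hcl hne hpΩ
  have hw0 : w ≠ 0 := by
    rintro rfl
    have hdot : dot 0 = fun _ => 0 := funext fun p => by simp [dot]
    rw [hdot, hne.image_const, csInf_singleton] at hw
    exact hw.false
  obtain ⟨v, hvS, t, ht, rfl⟩ := hgen w hwΩ hw0
  rw [sInf_image_dot_smul Ω v ht, dot_smul_left] at hw
  exact hw.not_ge (mul_le_mul_of_nonneg_left (hp v hvS) ht)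

lemma eq_univ_of_barrierCone_eq_bot (hconv : Convex ℝ Ω) (hcl : IsClosed Ω) (hne : Ω.Nonempty)
    (hB : barrierCone Ω = ⊥) : Ω = Set.univ := by
  refine (eq_setOf_forall_sInf_le_dot hconv hcl hne (Set.empty_subset _)
    fun w hw hw0 => (hw0 (by simpa [hB] using hw)).elim).trans ?_
  simp

lemma eq_halfPlane (hconv : Convex ℝ Ω) (hcl : IsClosed Ω) (hne : Ω.Nonempty) {v : ℝ × ℝ}
    (hv : v ∈ barrierCone Ω) (hgen : ∀ w ∈ barrierCone Ω, ∃ t : ℝ, 0 ≤ t ∧ w = t • v) :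
    Ω = {p | sInf (dot v '' Ω) ≤ dot v p} := by
  refine (eq_setOf_forall_sInf_le_dot hconv hcl hne (Set.singleton_subset_iff.2 hv)
    fun w hw _ => ⟨v, rfl, hgen w hw⟩).trans ?_
  simp

lemma eq_strip (hconv : Convex ℝ Ω) (hcl : IsClosed Ω) (hne : Ω.Nonempty) {v : ℝ × ℝ}
    (hv : v ∈ barrierCone Ω) (hv' : -v ∈ barrierCone Ω)
    (hgen : ∀ w ∈ barrierCone Ω, ∃ t : ℝ, w = t • v) :
    Ω = {p | sInf (dot v '' Ω) ≤ dot v p ∧ dot v p ≤ -sInf (dot (-v) '' Ω)} := by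
  refine (eq_setOf_forall_sInf_le_dot hconv hcl hne (S := {v, -v})
    (Set.insert_subset_iff.2 ⟨hv, Set.singleton_subset_iff.2 hv'⟩) fun w hw _ => ?_).trans ?_
  · obtain ⟨t, rfl⟩ := hgen w hw
    rcases le_total 0 t with ht | ht
    · exact ⟨v, by simp, t, ht, rfl⟩
    · exact ⟨-v, by simp, -t, neg_nonneg.2 ht, (neg_smul_neg t v).symm⟩
  · ext p
    simp only [Set.mem_insert_iff, Set.mem_singleton_iff, forall_eq_or_imp, forall_eq,
      Set.mem_ofPred_eq]
    rw [dot_neg_left]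
    constructor <;> rintro ⟨h₁, h₂⟩ <;> exact ⟨h₁, by linarith⟩

end ClosedConvex

theorem stmt_3_general (Ω : Set (ℝ × ℝ)) (hconv : Convex ℝ Ω) (hcl : IsClosed Ω)
    (hA : ∀ ij : ℤ × ℤ,
      BddBelow ((fun p : ℝ × ℝ => (ij.1 : ℝ) * p.1 + (ij.2 : ℝ) * p.2) '' Ω) →
      ij = (0, 0)) :
    Ω = Set.univ ∨
    (∃ a b c : ℝ, ¬ normalIsRational a b ∧
      Ω = {p : ℝ × ℝ | a * p.1 + b * p.2 ≤ c}) ∨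
    (∃ a b c₁ c₂ : ℝ, ¬ normalIsRational a b ∧
      Ω = {p : ℝ × ℝ | c₁ ≤ a * p.1 + b * p.2 ∧ a * p.1 + b * p.2 ≤ c₂}) := by
  have hC : ∀ z : ℤ × ℤ, ((z.1 : ℝ), (z.2 : ℝ)) ∈ barrierCone Ω → z = (0, 0) := hA
  have hne : Ω.Nonempty := by
    refine Set.nonempty_iff_ne_empty.2 fun h => ?_
    simpa using hA (1, 0) (by simp [h])
  by_cases hB : barrierCone Ω = ⊥
  · exact Or.inl (eq_univ_of_barrierCone_eq_bot hconv hcl hne hB)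
  obtain ⟨v, hv, hv0⟩ := (barrierCone Ω).ne_bot_iff.1 hB
  have hirr := PointedCone.not_normalIsRational_of_mem hC hv hv0
  have hline : ∀ w ∈ barrierCone Ω, ∃ t : ℝ, w = t • v :=
    fun _ hw => PointedCone.exists_eq_smul_of_mem hC hv hv0 hw
  by_cases hv' : -v ∈ barrierCone Ω
  · exact Or.inr <| Or.inr ⟨v.1, v.2, _, _, hirr, eq_strip hconv hcl hne hv hv' hline⟩
  refine Or.inr <| Or.inl ⟨-v.1, -v.2, -sInf (dot v '' Ω), fun h => hirr h.of_neg, ?_⟩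
  have hgen : ∀ w ∈ barrierCone Ω, ∃ t : ℝ, 0 ≤ t ∧ w = t • v := fun w hw => by
    obtain ⟨t, rfl⟩ := hline w hw
    exact ⟨t, (barrierCone Ω).nonneg_of_smul_mem hv' hw, rfl⟩
  refine (eq_halfPlane hconv hcl hne hv hgen).trans (Set.ext fun p => ?_)
  simp only [dot, Set.mem_ofPred_eq]
  constructor <;> intro h <;> linarith

/-- If no nonzero integer linear functional is bounded below on a convex closed set
`Ω ⊆ ℝ²` with nonempty interior, then `Ω` is all of `ℝ²`, or a half-plane whose
boundary has irrational slope, or a strip between two parallel lines of irrational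
slope. -/
theorem stmt_3 (Ω : Set (ℝ × ℝ)) (hconv : Convex ℝ Ω) (hcl : IsClosed Ω)
    (hint : (interior Ω).Nonempty)
    (hA : ∀ ij : ℤ × ℤ,
      BddBelow ((fun p : ℝ × ℝ => (ij.1 : ℝ) * p.1 + (ij.2 : ℝ) * p.2) '' Ω) →
      ij = (0, 0)) :
    Ω = Set.univ ∨
    (∃ a b c : ℝ, ¬ normalIsRational a b ∧
      Ω = {p : ℝ × ℝ | a * p.1 + b * p.2 ≤ c}) ∨
    (∃ a b c₁ c₂ : ℝ, ¬ normalIsRational a b ∧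
      Ω = {p : ℝ × ℝ | c₁ ≤ a * p.1 + b * p.2 ∧ a * p.1 + b * p.2 ≤ c₂}) :=
  stmt_3_general Ω hconv hcl hA
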